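/- Let G be the weighted graph on corners C with edges between adjacent corners weighted by Manhattan distance. Define π̃ on the maze states by: if s is a corner, follow an optimal corner policy; otherwise move directly (axis-aligned) to the corner c ∈ S(s) ∩ C minimizing d(s,c) + V*_{M'}(c), where V*_{M'} is the shortest-path distance in G to the goal. Then π̃ is an optimal policy for the maze MDP: for every state s the total cost incurred by π̃ from s equals V*_M(s). -/

import Mathlib

/-!
A shortest maze path to the goal can be transported, one step at a time from the goal
backwards, to corner paths: a step that stays off the grid hyperplanes only enlarges the grid
cell, so the previous corner still serves; a step leaving a grid hyperplane is compensated by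
projecting the corner onto that hyperplane, which yields an adjacent corner at no extra cost.
Conversely, the grid cell of a free point is an obstacle-free box, so walking straight to one
of its corners and then along corner edges is a genuine maze path.
-/

open scoped BigOperators

namespace Maze

/-- Points of the `d`-dimensional integer maze. -/
abbrev Pt (d : ℕ) := Fin d → ℤ

/-- An open axis-aligned hyperrectangular obstacle determined by `a, b`. -/
def Obst {d : ℕ} (a b : Pt d) : Set (Pt d) := {x | ∀ i, a i < x i ∧ x i < b i}

/-- The union of the `k` obstacles. -/
def OSet {d k : ℕ} (a b : Fin k → Pt d) : Set (Pt d) := ⋃ j, Obst (a j) (b j)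

/-- The list of `i`-th coordinates of obstacle boundaries together with the goal coordinate. -/
def Lists {d k : ℕ} (a b : Fin k → Pt d) (g : Pt d) (i : Fin d) : Finset ℤ :=
  (Finset.univ.image fun j => a j i) ∪ (Finset.univ.image fun j => b j i) ∪ {g i}

/-- The surface (closed grid cell) of a point `x` with respect to coordinate lists `L`:
`y` lies in the surface iff in every coordinate `i`, `y i` equals `x i` when `x i` is a
grid value, and otherwise `y i` lies between the grid values surrounding `x i`. -/
def Surf {d : ℕ} (L : Fin d → Finset ℤ) (x : Pt d) : Set (Pt d) :=
  {y | ∀ i, (x i ∈ L i → y i = x i) ∧ (∀ l ∈ L i, l < x i → l ≤ y i) ∧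
      (∀ l ∈ L i, x i < l → y i ≤ l)}

/-- Corners: points all of whose coordinates are grid values. -/
def Corners {d : ℕ} (L : Fin d → Finset ℤ) : Set (Pt d) := {c | ∀ i, c i ∈ L i}

/-- Manhattan distance. -/
def manh {d : ℕ} (s t : Pt d) : ℕ := ∑ i, (s i - t i).natAbs

/-- A unit move in a single coordinate. -/
def Step {d : ℕ} (x y : Pt d) : Prop :=
  ∃ i, (y i = x i + 1 ∨ y i = x i - 1) ∧ ∀ j, j ≠ i → y j = x j

/-- A maze path of length `n` from `s` to `t` avoiding the obstacle set `O`. -/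
def IsMazePath {d : ℕ} (O : Set (Pt d)) (f : ℕ → Pt d) (n : ℕ) (s t : Pt d) : Prop :=
  f 0 = s ∧ f n = t ∧ (∀ m, m < n → Step (f m) (f (m + 1))) ∧ (∀ m, m ≤ n → f m ∉ O)

/-- Minimal number of steps of an obstacle-avoiding maze path from `s` to `t`
(`⊤` if there is none). -/
noncomputable def mazeDist {d : ℕ} (O : Set (Pt d)) (s t : Pt d) : ℕ∞ :=
  sInf {N : ℕ∞ | ∃ n : ℕ, N = n ∧ ∃ f, IsMazePath O f n s t}

/-- Two corners are adjacent if they agree in all coordinates except one, where their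
values are consecutive elements of the corresponding list, and the axis-aligned segment
between them avoids the obstacles. -/
def Adjacent {d : ℕ} (L : Fin d → Finset ℤ) (O : Set (Pt d)) (c c' : Pt d) : Prop :=
  c ∈ Corners L ∧ c' ∈ Corners L ∧
  ∃ i, c i ≠ c' i ∧ (∀ j, j ≠ i → c j = c' j) ∧
    (∀ l ∈ L i, ¬(min (c i) (c' i) < l ∧ l < max (c i) (c' i))) ∧
    (∀ z : Pt d, (∀ j, j ≠ i → z j = c j) →
      min (c i) (c' i) ≤ z i → z i ≤ max (c i) (c' i) → z ∉ O)

/-- Shortest-path distance from `s` to `t` in the weighted corner graph, with edges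
between adjacent corners weighted by their Manhattan distance. -/
noncomputable def cornerDist {d : ℕ} (L : Fin d → Finset ℤ) (O : Set (Pt d))
    (s t : Pt d) : ℕ∞ :=
  sInf {N : ℕ∞ | ∃ (n : ℕ) (c : ℕ → Pt d), c 0 = s ∧ c n = t ∧
    (∀ m, m < n → Adjacent L O (c m) (c (m + 1))) ∧
    N = ∑ m ∈ Finset.range n, (manh (c m) (c (m + 1)) : ℕ∞)}

open Function Set

variable {d : ℕ}

lemma manh_self (x : Pt d) : manh x x = 0 := by simp [manh]

lemma eq_of_manh_eq_zero {x y : Pt d} (h : manh x y = 0) : x = y := by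
  funext i
  have := Finset.sum_eq_zero_iff.mp h i (Finset.mem_univ i)
  omega

lemma manh_triangle (x y z : Pt d) : manh x z ≤ manh x y + manh y z := by
  unfold manh
  rw [← Finset.sum_add_distrib]
  exact Finset.sum_le_sum fun i _ => by omega

lemma mem_uIcc_iff {x y z : Pt d} : z ∈ uIcc x y ↔ ∀ i, z i ∈ uIcc (x i) (y i) := by
  rw [← pi_univ_uIcc, mem_univ_pi]

lemma manh_add_manh_of_mem_uIcc {x y z : Pt d} (hz : z ∈ uIcc x y) :
    manh x z + manh z y = manh x y := by
  unfold manh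
  rw [← Finset.sum_add_distrib]
  refine Finset.sum_congr rfl fun i _ => ?_
  have := Set.mem_uIcc.mp (mem_uIcc_iff.mp hz i)
  omega

lemma manh_eq_one_of_step {x y : Pt d} (h : Step x y) : manh x y = 1 := by
  obtain ⟨i, hi, hj⟩ := h
  rw [manh, ← Finset.add_sum_erase _ _ (Finset.mem_univ i),
    Finset.sum_eq_zero fun j hj' => by have := hj j (Finset.ne_of_mem_erase hj'); omega]
  omega

lemma step_update {x : Pt d} {i : Fin d} {v : ℤ} (hv : v = x i + 1 ∨ v = x i - 1) :
    Step x (update x i v) :=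
  ⟨i, by rwa [update_self], fun _ hj => update_of_ne hj v x⟩

def ReachIn (O : Set (Pt d)) (n : ℕ) (s t : Pt d) : Prop :=
  ∃ f, IsMazePath O f n s t

namespace ReachIn

variable {O : Set (Pt d)} {m n : ℕ} {s t u : Pt d}

lemma refl (hs : s ∉ O) : ReachIn O 0 s s :=
  ⟨fun _ => s, rfl, rfl, fun _ hm => absurd hm (Nat.not_lt_zero _), fun _ _ => hs⟩

lemma eq_of_zero (h : ReachIn O 0 s t) : s = t := by
  obtain ⟨f, rfl, rfl, -⟩ := h
  rfl

lemma notMem_left (h : ReachIn O n s t) : s ∉ O := by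
  obtain ⟨f, rfl, -, -, hO⟩ := h
  exact hO 0 n.zero_le

lemma succ_iff : ReachIn O (n + 1) s t ↔ s ∉ O ∧ ∃ s', Step s s' ∧ ReachIn O n s' t := by
  constructor
  · rintro ⟨f, rfl, hn, hstep, hO⟩
    exact ⟨hO 0 (by omega), f 1, hstep 0 (by omega), fun m => f (m + 1), rfl, hn,
      fun m _ => hstep (m + 1) (by omega), fun m _ => hO (m + 1) (by omega)⟩
  · rintro ⟨hs, s', hss', f, rfl, hn, hstep, hO⟩
    refine ⟨fun | 0 => s | m + 1 => f m, rfl, hn, ?_, ?_⟩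
    · rintro (_ | m) hm
      exacts [hss', hstep m (by omega)]
    · rintro (_ | m) hm
      exacts [hs, hO m (by omega)]

lemma trans (h₁ : ReachIn O m s t) (h₂ : ReachIn O n t u) : ReachIn O (m + n) s u := by
  induction m generalizing s with
  | zero => obtain rfl := h₁.eq_of_zero; simpa using h₂
  | succ m ih =>
    obtain ⟨hs, s', hss', h⟩ := succ_iff.mp h₁
    rw [Nat.add_right_comm]
    exact succ_iff.mpr ⟨hs, s', hss', ih h⟩

end ReachIn

section MazeDist

variable {O : Set (Pt d)} {n : ℕ} {s t u : Pt d}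

lemma mazeDist_le_of_reachIn (h : ReachIn O n s t) : mazeDist O s t ≤ n :=
  sInf_le ⟨n, rfl, h⟩

lemma exists_reachIn_of_mazeDist_ne_top (h : mazeDist O s t ≠ ⊤) :
    ∃ n : ℕ, mazeDist O s t = n ∧ ReachIn O n s t := by
  have hne : {N : ℕ∞ | ∃ n : ℕ, N = n ∧ ∃ f, IsMazePath O f n s t}.Nonempty :=
    nonempty_iff_ne_empty.mpr fun he => h (by rw [mazeDist, he, sInf_empty])
  exact csInf_mem hne

lemma mazeDist_le_add_of_reachIn (h : ReachIn O n s t) :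
    mazeDist O s u ≤ n + mazeDist O t u := by
  rw [add_comm, mazeDist.eq_1 O t u, ENat.sInf_add]
  refine le_iInf₂ fun _ ⟨m, hm, hr⟩ => ?_
  rw [hm, add_comm]
  exact_mod_cast mazeDist_le_of_reachIn (h.trans hr)

lemma reachIn_manh_of_uIcc_subset {x y : Pt d} (h : uIcc x y ⊆ Oᶜ) :
    ReachIn O (manh x y) x y := by
  generalize hn : manh x y = n
  induction n generalizing x with
  | zero =>
    obtain rfl := eq_of_manh_eq_zero hn
    exact ReachIn.refl (h left_mem_uIcc)
  | succ n ih =>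
    obtain ⟨i, hi⟩ : ∃ i, x i ≠ y i := by
      by_contra! hxy
      rw [funext hxy, manh_self] at hn
      omega
    set x₁ := update x i (if x i < y i then x i + 1 else x i - 1)
    have hstep : Step x x₁ := step_update (by split_ifs <;> simp)
    have hx₁ : x₁ ∈ uIcc x y := mem_uIcc_iff.mpr fun j => by
      rcases eq_or_ne j i with rfl | hj
      · simp only [x₁, update_self, Set.mem_uIcc]
        split_ifs <;> omega
      · simp [x₁, update_of_ne hj]
    have hmanh : manh x₁ y = n := by
      have := manh_add_manh_of_mem_uIcc hx₁
      rw [manh_eq_one_of_step hstep] at this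
      omega
    exact ReachIn.succ_iff.mpr
      ⟨h left_mem_uIcc, x₁, hstep, ih ((uIcc_subset_uIcc_right hx₁).trans h) hmanh⟩

end MazeDist

/-- `Surf L x` is, by definition, the product of the cells `gridCell (L i) (x i)`. -/
def gridCell (l : Finset ℤ) (x : ℤ) : Set ℤ :=
  {y | (x ∈ l → y = x) ∧ (∀ m ∈ l, m < x → m ≤ y) ∧ (∀ m ∈ l, x < m → y ≤ m)}

section GridCell

variable {l : Finset ℤ} {x x' y : ℤ}

lemma self_mem_gridCell (l : Finset ℤ) (x : ℤ) : x ∈ gridCell l x :=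
  ⟨fun _ => rfl, fun _ _ h => h.le, fun _ _ h => h.le⟩

lemma ordConnected_gridCell (l : Finset ℤ) (x : ℤ) : (gridCell l x).OrdConnected := by
  refine ⟨fun y ⟨hy₁, hy₂, _⟩ z ⟨hz₁, _, hz₃⟩ w ⟨hyw, hwz⟩ => ⟨fun h => ?_, fun m hm hmx => ?_,
    fun m hm hxm => ?_⟩⟩
  · have := hy₁ h
    have := hz₁ h
    omega
  · exact (hy₂ m hm hmx).trans hyw
  · exact hwz.trans (hz₃ m hm hxm)

lemma exists_mem_gridCell (hl : l.Nonempty) (x : ℤ) : ∃ y ∈ l, y ∈ gridCell l x := by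
  by_cases h : (l.filter (· ≤ x)).Nonempty
  · obtain ⟨hy, hyx⟩ := Finset.mem_filter.mp (Finset.max'_mem _ h)
    exact ⟨_, hy, fun hx => le_antisymm hyx (Finset.le_max' _ x (by simp [hx])),
      fun m hm hmx => Finset.le_max' _ m (by simp [hm, hmx.le]), fun _ _ hxm => hyx.trans hxm.le⟩
  · simp only [Finset.not_nonempty_iff_eq_empty, Finset.filter_eq_empty_iff, not_le] at h
    exact ⟨l.min' hl, l.min'_mem hl, fun hx => absurd (h hx) (lt_irrefl x),
      fun m hm hmx => absurd (h hm) (not_lt.mpr hmx.le), fun m hm _ => l.min'_le m hm⟩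

lemma mem_Ioo_of_mem_gridCell {α β : ℤ} (hα : α ∈ l) (hβ : β ∈ l) (hy : y ∈ gridCell l x)
    (h : y ∈ Ioo α β) : x ∈ Ioo α β := by
  obtain ⟨hy₁, hy₂, hy₃⟩ := hy
  by_cases hx : x ∈ l
  · rwa [← hy₁ hx]
  · have := hy₂ β hβ
    have := hy₃ α hα
    have := ne_of_mem_of_not_mem hα hx
    have := ne_of_mem_of_not_mem hβ hx
    rw [mem_Ioo] at h ⊢
    omega

lemma gridCell_subset_of_notMem (hx : x ∉ l) (hx' : x' = x + 1 ∨ x' = x - 1) :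
    gridCell l x' ⊆ gridCell l x := by
  rintro y ⟨hy₁, hy₂, hy₃⟩
  refine ⟨fun h => absurd h hx, fun m hm hmx => ?_, fun m hm hxm => ?_⟩
  · rcases eq_or_ne m x' with rfl | hne
    · exact (hy₁ hm).ge
    · exact hy₂ m hm (by omega)
  · rcases eq_or_ne m x' with rfl | hne
    · exact (hy₁ hm).le
    · exact hy₃ m hm (by omega)

lemma notMem_Ioo_of_mem_gridCell (hx : x ∈ l) (hx' : x' = x + 1 ∨ x' = x - 1)
    (hy : y ∈ gridCell l x') : ∀ m ∈ l, m ∉ Ioo (min x y) (max x y) := by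
  obtain ⟨hy₁, hy₂, hy₃⟩ := hy
  have := hy₂ x hx
  have := hy₃ x hx
  rintro m hm ⟨hlo, hhi⟩
  rcases eq_or_ne m x' with rfl | hne
  · have := hy₁ hm
    omega
  · have := hy₂ m hm
    have := hy₃ m hm
    omega

lemma mem_uIcc_of_mem_gridCell {z : ℤ} (hx : x ∈ l) (hx' : x' = x + 1 ∨ x' = x - 1)
    (hy : y ∈ gridCell l x') (hz : z ∈ uIcc x y) (hzx : z ≠ x) : z ∈ uIcc x' y := by
  have := hy.2.1 x hx
  have := hy.2.2 x hx
  rw [Set.mem_uIcc] at hz ⊢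
  omega

end GridCell

section Surf

variable {L : Fin d → Finset ℤ}

lemma self_mem_surf (L : Fin d → Finset ℤ) (x : Pt d) : x ∈ Surf L x :=
  fun i => self_mem_gridCell (L i) (x i)

lemma uIcc_subset_surf {x y : Pt d} (hy : y ∈ Surf L x) : uIcc x y ⊆ Surf L x := by
  rw [← pi_univ_uIcc]
  exact fun z hz i => (ordConnected_gridCell _ _).uIcc_subset (self_mem_gridCell _ _) (hy i)
    (hz i (mem_univ i))

lemma exists_mem_surf_inter_corners (hL : ∀ i, (L i).Nonempty) (x : Pt d) :
    ∃ c, c ∈ Surf L x ∩ Corners L := by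
  choose c hcL hc using fun i => exists_mem_gridCell (hL i) (x i)
  exact ⟨c, hc, hcL⟩

lemma update_mem_corners {c : Pt d} {i : Fin d} {v : ℤ} (hc : c ∈ Corners L) (hv : v ∈ L i) :
    update c i v ∈ Corners L := by
  intro j
  rcases eq_or_ne j i with rfl | hj
  · rwa [update_self]
  · rw [update_of_ne hj]
    exact hc j

lemma surf_subset_of_step {s s' : Pt d} {i : Fin d} (hi : s' i = s i + 1 ∨ s' i = s i - 1)
    (hj : ∀ j ≠ i, s' j = s j) (hL : s i ∉ L i) : Surf L s' ⊆ Surf L s := by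
  intro y hy j
  rcases eq_or_ne j i with rfl | hji
  · exact gridCell_subset_of_notMem hL hi (hy j)
  · rw [← hj j hji]
    exact hy j

lemma update_mem_surf {s s' c : Pt d} {i : Fin d} (hj : ∀ j ≠ i, s' j = s j)
    (hc : c ∈ Surf L s') : update c i (s i) ∈ Surf L s := by
  intro j
  rcases eq_or_ne j i with rfl | hji
  · rw [update_self]
    exact self_mem_gridCell _ _
  · rw [update_of_ne hji, ← hj j hji]
    exact hc j

end Surf

lemma update_mem_uIcc (s c : Pt d) (i : Fin d) : update c i (s i) ∈ uIcc s c := by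
  refine mem_uIcc_iff.mpr fun j => ?_
  rcases eq_or_ne j i with rfl | hj
  · rw [update_self]
    exact left_mem_uIcc
  · rw [update_of_ne hj]
    exact right_mem_uIcc

def IsGridAligned (L : Fin d → Finset ℤ) (O : Set (Pt d)) : Prop :=
  ∀ x ∉ O, Surf L x ⊆ Oᶜ

section Lists

variable {k : ℕ} (a b : Fin k → Pt d) (g : Pt d)

lemma left_mem_lists (j : Fin k) (i : Fin d) : a j i ∈ Lists a b g i := by simp [Lists]

lemma right_mem_lists (j : Fin k) (i : Fin d) : b j i ∈ Lists a b g i := by simp [Lists]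

lemma goal_mem_corners : g ∈ Corners (Lists a b g) := fun i => by simp [Lists]

lemma lists_nonempty (i : Fin d) : (Lists a b g i).Nonempty := ⟨g i, goal_mem_corners a b g i⟩

lemma isGridAligned_lists : IsGridAligned (Lists a b g) (OSet a b) := by
  intro x hx y hy hyO
  obtain ⟨j, hj⟩ := mem_iUnion.mp hyO
  exact hx (mem_iUnion.mpr ⟨j, fun i =>
    mem_Ioo_of_mem_gridCell (left_mem_lists a b g j i) (right_mem_lists a b g j i) (hy i) (hj i)⟩)

end Lists

section CornerGraph

variable {L : Fin d → Finset ℤ} {O : Set (Pt d)}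

lemma adjacent_update_of_step (hLO : IsGridAligned L O) {s s' c : Pt d} {i : Fin d}
    (hs : s ∉ O) (hs' : s' ∉ O) (hi : s' i = s i + 1 ∨ s' i = s i - 1)
    (hj : ∀ j ≠ i, s' j = s j) (hL : s i ∈ L i) (hcS : c ∈ Surf L s') (hcC : c ∈ Corners L)
    (hci : c i ≠ s i) : Adjacent L O (update c i (s i)) c := by
  refine ⟨update_mem_corners hcC hL, hcC, i, ?_, fun j hj => update_of_ne hj _ _, ?_, ?_⟩
  · rw [update_self]
    exact hci.symm
  · rw [update_self]
    exact notMem_Ioo_of_mem_gridCell hL hi (hcS i)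
  intro z hz hz₁ hz₂
  rw [update_self] at hz₁ hz₂
  rcases eq_or_ne (z i) (s i) with hzi | hzi
  · have : z = update c i (s i) := by
      funext j
      rcases eq_or_ne j i with rfl | hji
      · rw [hzi, update_self]
      · exact hz j hji
    exact hLO s hs (this ▸ update_mem_surf hj hcS)
  · refine hLO s' hs' (uIcc_subset_surf hcS (mem_uIcc_iff.mpr fun j => ?_))
    rcases eq_or_ne j i with rfl | hji
    · exact mem_uIcc_of_mem_gridCell hL hi (hcS j) (Set.mem_uIcc.mpr (by omega)) hzi
    · rw [hz j hji, update_of_ne hji]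
      exact right_mem_uIcc

lemma exists_corner_of_step (hLO : IsGridAligned L O) {s s' c' : Pt d} (hs : s ∉ O)
    (hs' : s' ∉ O) (hss' : Step s s') (hc' : c' ∈ Surf L s' ∩ Corners L) :
    ∃ c ∈ Surf L s ∩ Corners L, c ∈ uIcc s c' ∧ (c = c' ∨ Adjacent L O c c') := by
  obtain ⟨i, hi, hj⟩ := hss'
  by_cases hL : s i ∈ L i
  · refine ⟨update c' i (s i), ⟨update_mem_surf hj hc'.1, update_mem_corners hc'.2 hL⟩,
      update_mem_uIcc s c' i, ?_⟩
    rcases eq_or_ne (c' i) (s i) with hci | hci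
    · left
      rw [← hci, update_eq_self]
    · exact .inr (adjacent_update_of_step hLO hs hs' hi hj hL hc'.1 hc'.2 hci)
  · exact ⟨c', ⟨surf_subset_of_step hi hj hL hc'.1, hc'.2⟩, right_mem_uIcc, .inl rfl⟩

lemma cornerDist_self (t : Pt d) : cornerDist L O t t = 0 :=
  nonpos_iff_eq_zero.mp <|
    sInf_le ⟨0, fun _ => t, rfl, rfl, fun _ hm => absurd hm (Nat.not_lt_zero _), by simp⟩

lemma cornerDist_le_of_adjacent {c c' t : Pt d} (h : Adjacent L O c c') :
    cornerDist L O c t ≤ manh c c' + cornerDist L O c' t := by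
  rw [add_comm, cornerDist.eq_1 L O c' t, ENat.sInf_add]
  refine le_iInf₂ fun _ ⟨n, cs, h0, hn, hadj, hN⟩ => ?_
  subst h0 hN
  refine sInf_le ⟨n + 1, fun | 0 => c | m + 1 => cs m, rfl, hn, ?_, ?_⟩
  · rintro (_ | m) hm
    exacts [h, hadj m (by omega)]
  · rw [Finset.sum_range_succ']

lemma reachIn_of_adjacent {c c' : Pt d} (h : Adjacent L O c c') : ReachIn O (manh c c') c c' := by
  obtain ⟨-, -, i, -, hagree, -, hseg⟩ := h
  refine reachIn_manh_of_uIcc_subset fun z hz => ?_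
  rw [mem_uIcc_iff] at hz
  have hzi := Set.mem_uIcc.mp (hz i)
  refine hseg z (fun j hj => ?_) (by omega) (by omega)
  have := Set.mem_uIcc.mp (hz j)
  rw [← hagree j hj] at this
  omega

lemma reachIn_of_chain {n : ℕ} {cs : ℕ → Pt d} (hadj : ∀ m < n, Adjacent L O (cs m) (cs (m + 1)))
    (h0 : cs 0 ∉ O) :
    ReachIn O (∑ m ∈ Finset.range n, manh (cs m) (cs (m + 1))) (cs 0) (cs n) := by
  induction n with
  | zero => exact ReachIn.refl h0
  | succ n ih =>
    rw [Finset.sum_range_succ]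
    exact (ih fun m hm => hadj m (by omega)).trans (reachIn_of_adjacent (hadj n (by omega)))

lemma mazeDist_le_cornerDist {c t : Pt d} (hc : c ∉ O) : mazeDist O c t ≤ cornerDist L O c t :=
  le_sInf fun _ ⟨_, cs, h0, hn, hadj, hN⟩ => by
    subst h0 hn hN
    rw [← Nat.cast_sum]
    exact mazeDist_le_of_reachIn (reachIn_of_chain hadj hc)

end CornerGraph

section Optimality

variable {L : Fin d → Finset ℤ} {O : Set (Pt d)}

lemma mazeDist_le_manh_add_cornerDist (hLO : IsGridAligned L O) {s c t : Pt d} (hs : s ∉ O)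
    (hc : c ∈ Surf L s) : mazeDist O s t ≤ manh s c + cornerDist L O c t := by
  have hfree := (uIcc_subset_surf hc).trans (hLO s hs)
  calc mazeDist O s t ≤ manh s c + mazeDist O c t :=
        mazeDist_le_add_of_reachIn (reachIn_manh_of_uIcc_subset hfree)
    _ ≤ manh s c + cornerDist L O c t := by
        gcongr
        exact mazeDist_le_cornerDist (hfree right_mem_uIcc)

lemma exists_corner_le_of_reachIn (hLO : IsGridAligned L O) {t : Pt d} (ht : t ∈ Corners L)
    {n : ℕ} {s : Pt d} (h : ReachIn O n s t) :
    ∃ c ∈ Surf L s ∩ Corners L, (manh s c : ℕ∞) + cornerDist L O c t ≤ n := by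
  induction n generalizing s with
  | zero =>
    obtain rfl := h.eq_of_zero
    exact ⟨s, ⟨self_mem_surf L s, ht⟩, by simp [manh_self, cornerDist_self]⟩
  | succ n ih =>
    obtain ⟨hs, s', hss', h'⟩ := ReachIn.succ_iff.mp h
    obtain ⟨c', hc', hle⟩ := ih h'
    obtain ⟨c, hc, hcc', hadj⟩ := exists_corner_of_step hLO hs h'.notMem_left hss' hc'
    have hcd : cornerDist L O c t ≤ manh c c' + cornerDist L O c' t := by
      rcases hadj with rfl | hadj
      · simp [manh_self]
      · exact cornerDist_le_of_adjacent hadj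
    have hmanh : manh s c + manh c c' ≤ 1 + manh s' c' := by
      rw [manh_add_manh_of_mem_uIcc hcc', ← manh_eq_one_of_step hss']
      exact manh_triangle s s' c'
    refine ⟨c, hc, ?_⟩
    calc (manh s c : ℕ∞) + cornerDist L O c t
        ≤ manh s c + (manh c c' + cornerDist L O c' t) := by gcongr
      _ = ((manh s c + manh c c' : ℕ) : ℕ∞) + cornerDist L O c' t := by push_cast; ring
      _ ≤ ((1 + manh s' c' : ℕ) : ℕ∞) + cornerDist L O c' t := by gcongr
      _ = 1 + ((manh s' c' : ℕ∞) + cornerDist L O c' t) := by push_cast; ring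
      _ ≤ 1 + n := by gcongr
      _ = (n + 1 : ℕ) := by push_cast; ring

lemma exists_corner_le_mazeDist (hLO : IsGridAligned L O) (hL : ∀ i, (L i).Nonempty)
    {t : Pt d} (ht : t ∈ Corners L) (s : Pt d) :
    ∃ c ∈ Surf L s ∩ Corners L, (manh s c : ℕ∞) + cornerDist L O c t ≤ mazeDist O s t := by
  by_cases h : mazeDist O s t = ⊤
  · obtain ⟨c, hc⟩ := exists_mem_surf_inter_corners hL s
    exact ⟨c, hc, h ▸ le_top⟩
  · obtain ⟨n, hn, hr⟩ := exists_reachIn_of_mazeDist_ne_top h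
    rw [hn]
    exact exists_corner_le_of_reachIn hLO ht hr

end Optimality

/-- the policy `π̃` is optimal: from any state `s` not in an obstacle there
is a corner `c` in the surface of `s` minimizing `d(s,c) + V*_{M'}(c)`, and moving
directly to `c` and then following shortest corner paths achieves the optimal maze value
`V*_M(s)`. -/
theorem pi_tilde_optimal {d k : ℕ} (a b : Fin k → Pt d) (g : Pt d) (s : Pt d)
    (hs : s ∉ OSet a b) :
    ∃ c ∈ Surf (Lists a b g) s ∩ Corners (Lists a b g),
      (∀ c' ∈ Surf (Lists a b g) s ∩ Corners (Lists a b g),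
        (manh s c : ℕ∞) + cornerDist (Lists a b g) (OSet a b) c g ≤
          (manh s c' : ℕ∞) + cornerDist (Lists a b g) (OSet a b) c' g) ∧
      (manh s c : ℕ∞) + cornerDist (Lists a b g) (OSet a b) c g =
        mazeDist (OSet a b) s g := by
  have hLO := isGridAligned_lists a b g
  have hupper : ∀ c ∈ Surf (Lists a b g) s ∩ Corners (Lists a b g),
      mazeDist (OSet a b) s g ≤ manh s c + cornerDist (Lists a b g) (OSet a b) c g :=
    fun c hc => mazeDist_le_manh_add_cornerDist hLO hs hc.1
  obtain ⟨c, hc, hlower⟩ :=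
    exists_corner_le_mazeDist hLO (lists_nonempty a b g) (goal_mem_corners a b g) s
  exact ⟨c, hc, fun c' hc' => hlower.trans (hupper c' hc'), le_antisymm hlower (hupper c hc)⟩

end Maze
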